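/- arXiv:math/0610734 — 2 statements merged into one kernel-verified Lean document; each statement's English description precedes it below -/
import Mathlib

section
/- Let p ≥ 1 and let X_w(s) be the generating function (weight s per unit horizontal distance) of walks with steps (1,1),(1,-1),(p,2),(p,-2) from the origin to the x-axis confined to 0 ≤ y ≤ w. Then for w ≥ 4, writing z = s², X_w satisfies X_w = 1 - z^{p/2}X_w + (z+z^{p/2})X_wX_{w-1} + (z^{1+p/2}+z^p)X_wX_{w-1}X_{w-2} - (z^{3p/2}+z^{2p})X_wX_{w-1}X_{w-2}X_{w-3} + z^{5p/2}X_wX_{w-1}X_{w-2}X_{w-3}X_{w-4}, as formal power series in s. -/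
open PowerSeries

/-- Heights visited by a walk starting at height `i` with the given steps
(second coordinate is the vertical displacement of a step). -/
def heights (i : ℤ) (l : List (ℤ × ℤ)) : List ℤ :=
  l.scanl (fun h st => h + st.2) i

/-- `IsWalk S w i j l` : `l` is a walk with steps from `S`, starting at height `i`,
ending at height `j`, with all visited heights in the strip `0 ≤ y ≤ w`. -/
def IsWalk (S : Set (ℤ × ℤ)) (w i j : ℤ) (l : List (ℤ × ℤ)) : Prop :=
  (∀ st ∈ l, st ∈ S) ∧ (∀ h ∈ heights i l, 0 ≤ h ∧ h ≤ w) ∧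
    i + (l.map Prod.snd).sum = j

/-- Number of walks with steps in `S`, width `w`, from height `i` to height `j`,
with total horizontal displacement `L`. -/
noncomputable def walkCount (S : Set (ℤ × ℤ)) (w i j L : ℤ) : ℕ :=
  Set.ncard {l : List (ℤ × ℤ) | IsWalk S w i j l ∧ (l.map Prod.fst).sum = L}

def dyckSteps : Set (ℤ × ℤ) := {(1, 1), (1, -1)}

def bballSteps : Set (ℤ × ℤ) := {(1, 1), (1, -1), (2, 2), (2, -2)}

def pSteps (p : ℕ) : Set (ℤ × ℤ) := {(1, 1), (1, -1), ((p : ℤ), 2), ((p : ℤ), -2)}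

/-- Generating function (in `s`, weight `s` per unit horizontal distance) of walks
with steps `(1,1),(1,-1),(p,2),(p,-2)` of width `w` from the `x`-axis to itself. -/
noncomputable def Xgf (p w : ℕ) : PowerSeries ℚ :=
  PowerSeries.mk fun L => (walkCount (pSteps p) w 0 0 L : ℚ)

namespace GPR

/-- total horizontal displacement -/
def wsum (l : List (ℤ × ℤ)) : ℤ := (l.map Prod.fst).sum

/-- total vertical displacement -/
def vsum (l : List (ℤ × ℤ)) : ℤ := (l.map Prod.snd).sum

@[simp] lemma wsum_nil : wsum [] = 0 := rfl
@[simp] lemma wsum_cons (s : ℤ × ℤ) (l : List (ℤ × ℤ)) : wsum (s :: l) = s.1 + wsum l := by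
  simp [wsum]
@[simp] lemma wsum_append (l₁ l₂ : List (ℤ × ℤ)) : wsum (l₁ ++ l₂) = wsum l₁ + wsum l₂ := by
  simp [wsum]
@[simp] lemma vsum_nil : vsum [] = 0 := rfl
@[simp] lemma vsum_cons (s : ℤ × ℤ) (l : List (ℤ × ℤ)) : vsum (s :: l) = s.2 + vsum l := by
  simp [vsum]
@[simp] lemma vsum_append (l₁ l₂ : List (ℤ × ℤ)) : vsum (l₁ ++ l₂) = vsum l₁ + vsum l₂ := by
  simp [vsum]

/-- all heights of the walk (starting at `i`, including endpoints) lie in `[lo,hi]` -/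
def okb (lo hi : ℤ) : ℤ → List (ℤ × ℤ) → Prop
  | i, [] => lo ≤ i ∧ i ≤ hi
  | i, s :: l => (lo ≤ i ∧ i ≤ hi) ∧ okb lo hi (i + s.2) l

@[simp] lemma okb_nil {lo hi i : ℤ} : okb lo hi i [] ↔ (lo ≤ i ∧ i ≤ hi) := Iff.rfl
@[simp] lemma okb_cons {lo hi i : ℤ} {s : ℤ × ℤ} {l : List (ℤ × ℤ)} :
    okb lo hi i (s :: l) ↔ (lo ≤ i ∧ i ≤ hi) ∧ okb lo hi (i + s.2) l := Iff.rfl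

lemma okb_heights {lo hi : ℤ} : ∀ (l : List (ℤ × ℤ)) (i : ℤ),
    (∀ h ∈ heights i l, lo ≤ h ∧ h ≤ hi) ↔ okb lo hi i l := by
  intro l
  induction l with
  | nil => intro i; simp [heights]
  | cons s t ih => intro i; simp [heights, List.scanl] at *; simp [← ih, heights, and_assoc]

lemma isWalk_iff {S : Set (ℤ × ℤ)} {w i j : ℤ} {l : List (ℤ × ℤ)} :
    IsWalk S w i j l ↔ (∀ st ∈ l, st ∈ S) ∧ okb 0 w i l ∧ i + vsum l = j := by
  unfold IsWalk
  rw [okb_heights]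
  rfl

lemma okb_bounds_start {lo hi i : ℤ} {l : List (ℤ × ℤ)} (h : okb lo hi i l) :
    lo ≤ i ∧ i ≤ hi := by
  cases l <;> [exact h; exact h.1]

lemma okb_append {lo hi i : ℤ} : ∀ {l₁ l₂ : List (ℤ × ℤ)},
    okb lo hi i (l₁ ++ l₂) ↔ okb lo hi i l₁ ∧ okb lo hi (i + vsum l₁) l₂ := by
  intro l₁
  induction l₁ generalizing i with
  | nil =>
      intro l₂
      simp only [List.nil_append, vsum_nil, add_zero, okb_nil]
      exact ⟨fun h => ⟨okb_bounds_start h, h⟩, fun h => h.2⟩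
  | cons s t ih =>
      intro l₂
      simp only [List.cons_append, okb_cons, ih, vsum_cons, and_assoc, ← add_assoc]

lemma okb_bounds_end {lo hi : ℤ} : ∀ {l : List (ℤ × ℤ)} {i : ℤ}, okb lo hi i l →
    lo ≤ i + vsum l ∧ i + vsum l ≤ hi := by
  intro l
  induction l with
  | nil => intro i h; simpa using h
  | cons s t ih =>
      intro i h
      have := ih h.2
      simpa [add_assoc] using this

lemma okb_shift {lo hi i c : ℤ} : ∀ {l : List (ℤ × ℤ)},
    okb (lo + c) (hi + c) (i + c) l ↔ okb lo hi i l := by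
  intro l
  induction l generalizing i with
  | nil => simp only [okb_nil]; omega
  | cons s t ih =>
      have : i + c + s.2 = i + s.2 + c := by ring
      simp only [okb_cons, this, ih]
      constructor
      · rintro ⟨⟨h1, h2⟩, h3⟩; exact ⟨⟨by omega, by omega⟩, h3⟩
      · rintro ⟨⟨h1, h2⟩, h3⟩; exact ⟨⟨by omega, by omega⟩, h3⟩

lemma okb_mono {lo hi lo' hi' i : ℤ} (h1 : lo' ≤ lo) (h2 : hi ≤ hi') :
    ∀ {l : List (ℤ × ℤ)}, okb lo hi i l → okb lo' hi' i l := by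
  intro l
  induction l generalizing i with
  | nil =>
      intro h
      simp only [okb_nil] at h ⊢
      omega
  | cons s t ih =>
      rintro ⟨⟨g1, g2⟩, h⟩
      exact ⟨⟨by omega, by omega⟩, ih h⟩

end GPR

namespace GPR

/-- lists whose steps all belong to `pSteps p` -/
def allowed (p : ℕ) : Set (List (ℤ × ℤ)) := {l | ∀ st ∈ l, st ∈ pSteps p}

lemma step_fst_pos {p : ℕ} (hp : 1 ≤ p) {st : ℤ × ℤ} (h : st ∈ pSteps p) : 1 ≤ st.1 := by
  rcases h with h | h | h | h <;> subst h <;> simp <;> omega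

lemma length_le_wsum {p : ℕ} (hp : 1 ≤ p) : ∀ {l : List (ℤ × ℤ)}, l ∈ allowed p →
    (l.length : ℤ) ≤ wsum l := by
  intro l
  induction l with
  | nil => intro _; simp
  | cons s t ih =>
      intro h
      have h1 : (1 : ℤ) ≤ s.1 := step_fst_pos hp (h s (by simp))
      have h2 := ih (fun st hst => h st (by simp [hst]))
      simp only [List.length_cons, wsum_cons]
      push_cast
      omega

lemma wsum_nonneg {p : ℕ} (hp : 1 ≤ p) {l : List (ℤ × ℤ)} (h : l ∈ allowed p) :
    0 ≤ wsum l := le_trans (by positivity) (length_le_wsum hp h)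

/-- the 4 steps as a Finset -/
def stepFinset (p : ℕ) : Finset (ℤ × ℤ) := {(1, 1), (1, -1), ((p : ℤ), 2), ((p : ℤ), -2)}

lemma mem_stepFinset {p : ℕ} {st : ℤ × ℤ} : st ∈ pSteps p ↔ st ∈ stepFinset p := by
  simp [pSteps, stepFinset]

lemma finite_fiber (p : ℕ) (hp : 1 ≤ p) (n : ℤ) :
    {l : List (ℤ × ℤ) | l ∈ allowed p ∧ wsum l = n}.Finite := by
  have key : {l : List (ℤ × ℤ) | l ∈ allowed p ∧ wsum l = n} ⊆
      (fun l : List (stepFinset p) => l.map Subtype.val) ''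
        {l : List (stepFinset p) | l.length ≤ n.toNat} := by
    rintro l ⟨hl, hn⟩
    have hlen : (l.length : ℤ) ≤ n := hn ▸ length_le_wsum hp hl
    refine ⟨l.pmap (fun st h => (⟨st, h⟩ : stepFinset p)) (fun st h => mem_stepFinset.mp (hl st h)), ?_, ?_⟩
    · simp only [Set.mem_setOf_eq, List.length_pmap]
      omega
    · simp [List.map_pmap]
  exact Set.Finite.subset (Set.Finite.image _ (List.finite_length_le _ _)) key

/-- generating function of a set of lists, by total horizontal displacement -/
noncomputable def gf (A : Set (List (ℤ × ℤ))) : PowerSeries ℚ :=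
  PowerSeries.mk fun n => ((Set.ncard {l | l ∈ A ∧ wsum l = (n : ℤ)} : ℕ) : ℚ)

lemma coeff_gf (A : Set (List (ℤ × ℤ))) (n : ℕ) :
    (PowerSeries.coeff n) (gf A) = ((Set.ncard {l | l ∈ A ∧ wsum l = (n : ℤ)} : ℕ) : ℚ) := by
  simp [gf]

lemma gf_congr {A B : Set (List (ℤ × ℤ))} (h : A = B) : gf A = gf B := by rw [h]

lemma gf_empty : gf (∅ : Set (List (ℤ × ℤ))) = 0 := by
  ext n
  simp [gf]

lemma gf_nil : gf ({[]} : Set (List (ℤ × ℤ))) = 1 := by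
  ext n
  rw [coeff_gf]
  have : {l | l ∈ ({[]} : Set (List (ℤ × ℤ))) ∧ wsum l = (n : ℤ)} =
      if n = 0 then {[]} else ∅ := by
    split_ifs with h
    · subst h
      ext l
      simp only [Set.mem_setOf_eq, Set.mem_singleton_iff]
      constructor
      · rintro ⟨rfl, _⟩; rfl
      · rintro rfl; exact ⟨rfl, by simp⟩
    · ext l
      simp only [Set.mem_setOf_eq, Set.mem_empty_iff_false, iff_false, not_and,
        Set.mem_singleton_iff]
      rintro rfl hs
      rw [wsum_nil] at hs
      exact h (by exact_mod_cast hs.symm)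
  rw [this]
  rcases Nat.eq_zero_or_pos n with rfl | hn
  · simp
  · rw [if_neg (by omega)]
    simp [PowerSeries.coeff_one, Nat.pos_iff_ne_zero.mp hn]

lemma gf_single (k : ℕ) (m : ℤ) : gf ({[((k : ℤ), m)]} : Set (List (ℤ × ℤ))) =
    PowerSeries.X ^ k := by
  ext n
  rw [coeff_gf, PowerSeries.coeff_X_pow]
  have : {l | l ∈ ({[((k : ℤ), m)]} : Set (List (ℤ × ℤ))) ∧ wsum l = (n : ℤ)} =
      if n = k then {[((k : ℤ), m)]} else ∅ := by
    split_ifs with h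
    · subst h
      ext l
      simp only [Set.mem_setOf_eq, Set.mem_singleton_iff]
      constructor
      · rintro ⟨rfl, _⟩; rfl
      · rintro rfl; exact ⟨rfl, by simp [wsum]⟩
    · ext l
      simp only [Set.mem_setOf_eq, Set.mem_empty_iff_false, iff_false, not_and,
        Set.mem_singleton_iff]
      rintro rfl hs
      simp only [wsum, List.map_cons, List.map_nil, List.sum_cons, List.sum_nil, add_zero] at hs
      exact h (by exact_mod_cast hs.symm)
  rw [this]
  split_ifs with h <;> simp

lemma gf_union {p : ℕ} (hp : 1 ≤ p) {A B : Set (List (ℤ × ℤ))}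
    (hA : A ⊆ allowed p) (hB : B ⊆ allowed p) (hd : Disjoint A B) :
    gf (A ∪ B) = gf A + gf B := by
  ext n
  rw [map_add, coeff_gf, coeff_gf, coeff_gf]
  have hu : {l | l ∈ A ∪ B ∧ wsum l = (n : ℤ)} =
      {l | l ∈ A ∧ wsum l = (n : ℤ)} ∪ {l | l ∈ B ∧ wsum l = (n : ℤ)} := by
    ext l; simp only [Set.mem_union, Set.mem_setOf_eq]; tauto
  have fA : {l | l ∈ A ∧ wsum l = (n : ℤ)}.Finite :=
    (finite_fiber p hp n).subset (fun l hl => ⟨hA hl.1, hl.2⟩)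
  have fB : {l | l ∈ B ∧ wsum l = (n : ℤ)}.Finite :=
    (finite_fiber p hp n).subset (fun l hl => ⟨hB hl.1, hl.2⟩)
  have hd' : Disjoint {l | l ∈ A ∧ wsum l = (n : ℤ)} {l | l ∈ B ∧ wsum l = (n : ℤ)} :=
    Set.disjoint_of_subset (fun l hl => hl.1) (fun l hl => hl.1) hd
  rw [hu, Set.ncard_union_eq hd' fA fB]
  push_cast
  ring

end GPR

namespace GPR

lemma gf_mul {p : ℕ} (hp : 1 ≤ p) {A B : Set (List (ℤ × ℤ))}
    (hA : A ⊆ allowed p) (hB : B ⊆ allowed p)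
    (hinj : ∀ a ∈ A, ∀ b ∈ B, ∀ a' ∈ A, ∀ b' ∈ B, a ++ b = a' ++ b' → a = a' ∧ b = b') :
    gf (Set.image2 (· ++ ·) A B) = gf A * gf B := by
  classical
  ext n
  rw [PowerSeries.coeff_mul, coeff_gf]
  have fA : ∀ i : ℕ, {l | l ∈ A ∧ wsum l = (i : ℤ)}.Finite := fun i =>
    (finite_fiber p hp i).subset (fun l hl => ⟨hA hl.1, hl.2⟩)
  have fB : ∀ i : ℕ, {l | l ∈ B ∧ wsum l = (i : ℤ)}.Finite := fun i =>
    (finite_fiber p hp i).subset (fun l hl => ⟨hB hl.1, hl.2⟩)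
  set T : ℕ × ℕ → Finset (List (ℤ × ℤ)) := fun ij =>
    Finset.image (fun ab : List (ℤ × ℤ) × List (ℤ × ℤ) => ab.1 ++ ab.2)
      ((fA ij.1).toFinset ×ˢ (fB ij.2).toFinset) with hT
  have hmemT : ∀ ij (l : List (ℤ × ℤ)), l ∈ T ij ↔
      ∃ a b, (a ∈ A ∧ wsum a = (ij.1 : ℤ)) ∧ (b ∈ B ∧ wsum b = (ij.2 : ℤ)) ∧ a ++ b = l := by
    intro ij l
    simp only [hT, Finset.mem_image, Finset.mem_product, Set.Finite.mem_toFinset,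
      Set.mem_setOf_eq, Prod.exists]
    constructor
    · rintro ⟨a, b, ⟨ha, hb⟩, hab⟩
      exact ⟨a, b, ha, hb, hab⟩
    · rintro ⟨a, b, ha, hb, hab⟩
      exact ⟨a, b, ⟨ha, hb⟩, hab⟩
  have hset : {l | l ∈ Set.image2 (· ++ ·) A B ∧ wsum l = (n : ℤ)} =
      ↑((Finset.HasAntidiagonal.antidiagonal n).biUnion T) := by
    ext l
    simp only [Set.mem_setOf_eq, Finset.coe_biUnion, Set.mem_iUnion, Finset.mem_coe,
      Finset.HasAntidiagonal.mem_antidiagonal]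
    constructor
    · rintro ⟨⟨a, ha, b, hb, rfl⟩, hw⟩
      rw [wsum_append] at hw
      have ha0 : 0 ≤ wsum a := wsum_nonneg hp (hA ha)
      have hb0 : 0 ≤ wsum b := wsum_nonneg hp (hB hb)
      refine ⟨((wsum a).toNat, (wsum b).toNat), by omega, ?_⟩
      rw [hmemT]
      exact ⟨a, b, ⟨ha, by omega⟩, ⟨hb, by omega⟩, rfl⟩
    · rintro ⟨ij, hij, hl⟩
      rw [hmemT] at hl
      obtain ⟨a, b, ⟨ha, hwa⟩, ⟨hb, hwb⟩, rfl⟩ := hl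
      refine ⟨⟨a, ha, b, hb, rfl⟩, ?_⟩
      rw [wsum_append, hwa, hwb]
      exact_mod_cast congrArg (Nat.cast : ℕ → ℤ) hij
  rw [hset, Set.ncard_coe_finset]
  rw [Finset.card_biUnion]
  · push_cast
    rw [Finset.sum_congr rfl]
    intro ij _
    rw [coeff_gf, coeff_gf]
    have hcard : (T ij).card = (fA ij.1).toFinset.card * (fB ij.2).toFinset.card := by
      rw [hT]
      rw [Finset.card_image_of_injOn, Finset.card_product]
      rintro ⟨a, b⟩ hab ⟨a', b'⟩ hab' he
      simp only [Finset.mem_coe, Finset.mem_product, Set.Finite.mem_toFinset,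
        Set.mem_setOf_eq] at hab hab'
      have := hinj a hab.1.1 b hab.2.1 a' hab'.1.1 b' hab'.2.1 he
      simp [Prod.ext_iff, this.1, this.2]
    rw [hcard]
    rw [Set.ncard_eq_toFinset_card _ (fA ij.1), Set.ncard_eq_toFinset_card _ (fB ij.2)]
    push_cast
    ring
  · rintro x hx y hy hxy
    rw [Function.onFun, Finset.disjoint_left]
    intro l hlx hly
    rw [hmemT] at hlx hly
    obtain ⟨a, b, ⟨ha, hwa⟩, ⟨hb, hwb⟩, rfl⟩ := hlx
    obtain ⟨a', b', ⟨ha', hwa'⟩, ⟨hb', hwb'⟩, he⟩ := hly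
    obtain ⟨rfl, rfl⟩ := hinj a' ha' b' hb' a ha b hb he
    apply hxy
    have h1 : (x.1 : ℤ) = y.1 := by rw [← hwa, hwa']
    have h2 : (x.2 : ℤ) = y.2 := by rw [← hwb, hwb']
    ext <;> omega

end GPR

namespace GPR

def WS (p v : ℕ) (a b : ℤ) : Set (List (ℤ × ℤ)) := {l | IsWalk (pSteps p) v a b l}

noncomputable def W (p v : ℕ) (a b : ℤ) : PowerSeries ℚ := gf (WS p v a b)

lemma mem_WS {p v : ℕ} {a b : ℤ} {l : List (ℤ × ℤ)} :
    l ∈ WS p v a b ↔ (∀ st ∈ l, st ∈ pSteps p) ∧ okb 0 v a l ∧ a + vsum l = b := by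
  rw [WS, Set.mem_setOf_eq, isWalk_iff]

lemma WS_allowed {p v : ℕ} {a b : ℤ} : WS p v a b ⊆ allowed p := fun l hl =>
  (mem_WS.mp hl).1

lemma WS_empty_of_neg {p v : ℕ} {a b : ℤ} (hb : b < 0) : WS p v a b = ∅ := by
  ext l
  simp only [Set.mem_empty_iff_false, iff_false]
  intro hl
  rw [mem_WS] at hl
  have := okb_bounds_end hl.2.1
  omega

lemma W_zero_of_neg {p v : ℕ} {a b : ℤ} (hb : b < 0) : W p v a b = 0 := by
  rw [W, WS_empty_of_neg hb, gf_empty]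

lemma gf_cons {p : ℕ} (hp : 1 ≤ p) (k : ℕ) (m : ℤ) (hs : (((k : ℤ), m)) ∈ pSteps p)
    {A : Set (List (ℤ × ℤ))} (hA : A ⊆ allowed p) :
    gf (List.cons ((k : ℤ), m) '' A) = PowerSeries.X ^ k * gf A := by
  have him : List.cons ((k : ℤ), m) '' A =
      Set.image2 (· ++ ·) ({[((k : ℤ), m)]} : Set (List (ℤ × ℤ))) A := by
    rw [Set.image2_singleton_left]
    rfl
  have hsing : ({[((k : ℤ), m)]} : Set (List (ℤ × ℤ))) ⊆ allowed p := by
    rintro l hl st hst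
    rw [Set.mem_singleton_iff] at hl
    subst hl
    rw [List.mem_singleton] at hst
    subst hst
    exact hs
  have hinj : ∀ a ∈ ({[((k : ℤ), m)]} : Set (List (ℤ × ℤ))), ∀ b ∈ A,
      ∀ a' ∈ ({[((k : ℤ), m)]} : Set (List (ℤ × ℤ))), ∀ b' ∈ A,
      a ++ b = a' ++ b' → a = a' ∧ b = b' := by
    intro a ha b hb a' ha' b' hb' he
    rw [Set.mem_singleton_iff] at ha ha'
    subst ha; subst ha'
    simpa using he
  rw [him, gf_mul hp hsing hA hinj, gf_single]

lemma gf_concat {p : ℕ} (hp : 1 ≤ p) (k : ℕ) (m : ℤ) (hs : (((k : ℤ), m)) ∈ pSteps p)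
    {A : Set (List (ℤ × ℤ))} (hA : A ⊆ allowed p) :
    gf ((fun l => l ++ [((k : ℤ), m)]) '' A) = gf A * PowerSeries.X ^ k := by
  have him : (fun l => l ++ [((k : ℤ), m)]) '' A =
      Set.image2 (· ++ ·) A ({[((k : ℤ), m)]} : Set (List (ℤ × ℤ))) := by
    rw [Set.image2_singleton_right]
  have hsing : ({[((k : ℤ), m)]} : Set (List (ℤ × ℤ))) ⊆ allowed p := by
    rintro l hl st hst
    rw [Set.mem_singleton_iff] at hl
    subst hl
    rw [List.mem_singleton] at hst
    subst hst
    exact hs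
  have hinj : ∀ a ∈ A, ∀ b ∈ ({[((k : ℤ), m)]} : Set (List (ℤ × ℤ))),
      ∀ a' ∈ A, ∀ b' ∈ ({[((k : ℤ), m)]} : Set (List (ℤ × ℤ))),
      a ++ b = a' ++ b' → a = a' ∧ b = b' := by
    intro a ha b hb a' ha' b' hb' he
    rw [Set.mem_singleton_iff] at hb hb'
    subst hb; subst hb'
    exact ⟨List.append_cancel_right he, rfl⟩
  rw [him, gf_mul hp hA hsing hinj, gf_single]

lemma up1_mem {p : ℕ} : ((1 : ℤ), (1 : ℤ)) ∈ pSteps p := by simp [pSteps]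
lemma dn1_mem {p : ℕ} : ((1 : ℤ), (-1 : ℤ)) ∈ pSteps p := by simp [pSteps]
lemma up2_mem {p : ℕ} : (((p : ℤ)), (2 : ℤ)) ∈ pSteps p := by simp [pSteps]
lemma dn2_mem {p : ℕ} : (((p : ℤ)), (-2 : ℤ)) ∈ pSteps p := by simp [pSteps]

/-- first-step decomposition of excursions, as sets -/
lemma WS_first_step (p v : ℕ) : WS p v 0 0 =
    {[]} ∪ ((List.cons ((1 : ℤ), (1 : ℤ)) '' WS p v 1 0) ∪
      (List.cons (((p : ℤ)), (2 : ℤ)) '' WS p v 2 0)) := by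
  ext l
  constructor
  · intro hl
    rw [mem_WS] at hl
    obtain ⟨hS, hok, hend⟩ := hl
    match l with
    | [] => exact Or.inl rfl
    | s :: t =>
      obtain ⟨-, hok'⟩ := hok
      have hst := hS s (by simp)
      have hpos := (okb_bounds_start hok').1
      have hmem : ∀ a : ℤ, s.2 = a → t ∈ WS p v a 0 := by
        intro a ha
        rw [mem_WS]
        refine ⟨fun st h => hS st (by simp [h]), ?_, ?_⟩
        · rwa [← ha, ← zero_add s.2]
        · have := hend
          rw [vsum_cons] at this
          omega
      rcases hst with h | h | h | h
      · refine Or.inr (Or.inl ⟨t, hmem 1 (by rw [h]), ?_⟩)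
        rw [h]
      · exfalso
        rw [h] at hpos
        simp at hpos
      · refine Or.inr (Or.inr ⟨t, hmem 2 (by rw [h]), ?_⟩)
        rw [h]
      · exfalso
        rw [h] at hpos
        simp at hpos
  · rintro (rfl | (⟨t, ht, rfl⟩ | ⟨t, ht, rfl⟩)) <;>
      [skip; (rw [mem_WS] at ht ⊢; obtain ⟨hS, hok, hend⟩ := ht);
       (rw [mem_WS] at ht ⊢; obtain ⟨hS, hok, hend⟩ := ht)]
    · rw [mem_WS]
      refine ⟨by simp, ?_, by simp⟩
      simp only [okb_nil]
      exact ⟨le_refl 0, by positivity⟩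
    · refine ⟨?_, ?_, ?_⟩
      · intro st h
        rcases List.mem_cons.mp h with rfl | h
        · exact up1_mem
        · exact hS st h
      · refine ⟨⟨le_refl 0, by positivity⟩, ?_⟩
        simpa using hok
      · simp only [vsum_cons]
        omega
    · refine ⟨?_, ?_, ?_⟩
      · intro st h
        rcases List.mem_cons.mp h with rfl | h
        · exact up2_mem
        · exact hS st h
      · refine ⟨⟨le_refl 0, by positivity⟩, ?_⟩
        simpa using hok
      · simp only [vsum_cons]
        omega

end GPR

namespace GPR

lemma exists_factor {p : ℕ} {v : ℤ} : ∀ (l : List (ℤ × ℤ)) (a : ℤ),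
    (∀ st ∈ l, st ∈ pSteps p) → okb 0 v a l → 1 ≤ a →
    okb 1 v a l ∨ ∃ m d r, l = m ++ d :: r ∧ d ∈ pSteps p ∧ okb 1 v a m ∧
      (a + vsum m) + d.2 = 0 ∧ okb 0 v 0 r := by
  intro l
  induction l with
  | nil =>
      intro a _ hok ha
      exact Or.inl ⟨ha, hok.2⟩
  | cons s t ih =>
      intro a hS hok ha
      obtain ⟨⟨ha0, hav⟩, hok'⟩ := hok
      by_cases h1 : 1 ≤ a + s.2
      · rcases ih (a + s.2) (fun st h => hS st (by simp [h])) hok' h1 with ht | ⟨m, d, r, rfl, hd, hm, he, hr⟩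
        · exact Or.inl ⟨⟨ha, hav⟩, ht⟩
        · refine Or.inr ⟨s :: m, d, r, by simp, hd, ⟨⟨ha, hav⟩, hm⟩, ?_, hr⟩
          rw [vsum_cons]
          omega
      · have hz : a + s.2 = 0 := by
          have := (okb_bounds_start hok').1
          omega
        refine Or.inr ⟨[], s, t, by simp, hS s (by simp), ⟨ha, hav⟩, by simpa using hz, ?_⟩
        rwa [hz] at hok'
  
lemma factor_unique {v : ℤ} : ∀ (m : List (ℤ × ℤ)) (a : ℤ) (m' : List (ℤ × ℤ))
    (d d' : ℤ × ℤ) (r r' : List (ℤ × ℤ)),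
    m ++ d :: r = m' ++ d' :: r' →
    okb 1 v a m → okb 1 v a m' →
    (a + vsum m) + d.2 = 0 → (a + vsum m') + d'.2 = 0 →
    m = m' ∧ d = d' ∧ r = r' := by
  intro m
  induction m with
  | nil =>
      intro a m' d d' r r' he hm hm' hd hd'
      match m' with
      | [] =>
          simp only [List.nil_append, List.cons.injEq] at he
          exact ⟨rfl, he.1, he.2⟩
      | s :: m'' =>
          exfalso
          simp only [List.nil_append, List.cons_append, List.cons.injEq] at he
          obtain ⟨rfl, -⟩ := he
          have h1 : 1 ≤ a + d.2 := (okb_bounds_start hm'.2).1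
          simp only [vsum_nil] at hd
          omega
  | cons s m₁ ih =>
      intro a m' d d' r r' he hm hm' hd hd'
      match m' with
      | [] =>
          exfalso
          simp only [List.cons_append, List.nil_append, List.cons.injEq] at he
          obtain ⟨hsd, -⟩ := he
          have h1 : 1 ≤ a + s.2 := (okb_bounds_start hm.2).1
          rw [← hsd] at hd'
          simp only [vsum_nil] at hd'
          omega
      | s' :: m₁' =>
          simp only [List.cons_append, List.cons.injEq] at he
          obtain ⟨rfl, he⟩ := he
          have := ih (a + s.2) m₁' d d' r r' he hm.2 hm'.2
            (by rw [vsum_cons] at hd; omega) (by rw [vsum_cons] at hd'; omega)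
          exact ⟨by rw [this.1], this.2.1, this.2.2⟩

end GPR

namespace GPR

lemma okb_shift1 {hi a : ℤ} : ∀ {m : List (ℤ × ℤ)}, okb 1 hi a m ↔ okb 0 (hi - 1) (a - 1) m := by
  intro m
  induction m generalizing a with
  | nil => simp only [okb_nil]; omega
  | cons s t ih =>
      simp only [okb_cons]
      have h : a - 1 + s.2 = (a + s.2) - 1 := by ring
      rw [h, ← ih]
      constructor
      · rintro ⟨⟨h1, h2⟩, h3⟩; exact ⟨⟨by omega, by omega⟩, h3⟩
      · rintro ⟨⟨h1, h2⟩, h3⟩; exact ⟨⟨by omega, by omega⟩, h3⟩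

lemma mem_WS_shift {p u : ℕ} {a c : ℤ} {m : List (ℤ × ℤ)} :
    m ∈ WS p u (a - 1) c ↔
      (∀ st ∈ m, st ∈ pSteps p) ∧ okb 1 ((u : ℤ) + 1) a m ∧ a + vsum m = c + 1 := by
  rw [mem_WS]
  have h1 : okb 1 ((u : ℤ) + 1) a m ↔ okb 0 (u : ℤ) (a - 1) m := by
    rw [okb_shift1]
    norm_num
  rw [h1]
  constructor
  · rintro ⟨hS, hok, he⟩; exact ⟨hS, hok, by omega⟩
  · rintro ⟨hS, hok, he⟩; exact ⟨hS, hok, by omega⟩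

lemma cast_succ (u : ℕ) : (((u + 1 : ℕ)) : ℤ) = (u : ℤ) + 1 := by push_cast; ring

lemma WS_ML (p u : ℕ) (a j : ℤ) (ha : 1 ≤ a) :
    WS p (u + 1) a j = WS p u (a - 1) (j - 1) ∪
      (Set.image2 (· ++ ·) ((fun l => l ++ [((1 : ℤ), (-1 : ℤ))]) '' WS p u (a - 1) 0)
          (WS p (u + 1) 0 j) ∪
        Set.image2 (· ++ ·) ((fun l => l ++ [((p : ℤ), (-2 : ℤ))]) '' WS p u (a - 1) 1)
          (WS p (u + 1) 0 j)) := by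
  ext l
  constructor
  · intro hl
    rw [mem_WS] at hl
    obtain ⟨hS, hok, hend⟩ := hl
    rw [cast_succ] at hok
    rcases exists_factor l a hS hok ha with hl1 | ⟨m, d, r, rfl, hd, hm, he, hr⟩
    · exact Or.inl (mem_WS_shift.mpr ⟨hS, hl1, by omega⟩)
    · have hSm : ∀ st ∈ m, st ∈ pSteps p := fun st h => hS st (by simp [h])
      have hSr : ∀ st ∈ r, st ∈ pSteps p := fun st h => hS st (by simp [h])
      have hrWS : r ∈ WS p (u + 1) 0 j := by
        rw [mem_WS, cast_succ]
        refine ⟨hSr, hr, ?_⟩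
        rw [vsum_append, vsum_cons] at hend
        omega
      have hb1 : 1 ≤ a + vsum m := (okb_bounds_end hm).1
      have hassoc : m ++ d :: r = (m ++ [d]) ++ r := by
        rw [List.append_assoc]; rfl
      rcases hd with hd | hd | hd | hd <;> subst hd <;> simp only at he
      · omega
      · refine Or.inr (Or.inl ?_)
        rw [hassoc]
        exact Set.mem_image2_of_mem ⟨m, mem_WS_shift.mpr ⟨hSm, hm, by omega⟩, rfl⟩ hrWS
      · omega
      · refine Or.inr (Or.inr ?_)
        rw [hassoc]
        exact Set.mem_image2_of_mem ⟨m, mem_WS_shift.mpr ⟨hSm, hm, by omega⟩, rfl⟩ hrWS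
  · rintro (hl | (hE | hE))
    · rw [mem_WS_shift] at hl
      obtain ⟨hS, hok, hend⟩ := hl
      rw [mem_WS, cast_succ]
      exact ⟨hS, okb_mono (by omega) (le_refl _) hok, by omega⟩
    · obtain ⟨x, ⟨m, hmWS, rfl⟩, r, hrWS, rfl⟩ := hE
      rw [mem_WS_shift] at hmWS
      obtain ⟨hSm, hm1, hem⟩ := hmWS
      rw [mem_WS, cast_succ] at hrWS ⊢
      obtain ⟨hSr, hokr, her⟩ := hrWS
      beta_reduce
      refine ⟨?_, ?_, ?_⟩
      · intro st hst
        simp only [List.append_assoc, List.singleton_append, List.mem_append,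
          List.mem_cons] at hst
        rcases hst with h | h | h
        · exact hSm st h
        · subst h; exact dn1_mem
        · exact hSr st h
      · rw [List.append_assoc, List.singleton_append, okb_append]
        refine ⟨okb_mono (by omega) (le_refl _) hm1, ?_⟩
        have hbd := okb_bounds_end hm1
        refine ⟨⟨by omega, by omega⟩, ?_⟩
        have : a + vsum m + (-1 : ℤ) = 0 := by omega
        simp only [this]
        exact hokr
      · rw [List.append_assoc, List.singleton_append, vsum_append, vsum_cons]
        omega
    · obtain ⟨x, ⟨m, hmWS, rfl⟩, r, hrWS, rfl⟩ := hE
      rw [mem_WS_shift] at hmWS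
      obtain ⟨hSm, hm1, hem⟩ := hmWS
      rw [mem_WS, cast_succ] at hrWS ⊢
      obtain ⟨hSr, hokr, her⟩ := hrWS
      beta_reduce
      refine ⟨?_, ?_, ?_⟩
      · intro st hst
        simp only [List.append_assoc, List.singleton_append, List.mem_append,
          List.mem_cons] at hst
        rcases hst with h | h | h
        · exact hSm st h
        · subst h; exact dn2_mem
        · exact hSr st h
      · rw [List.append_assoc, List.singleton_append, okb_append]
        refine ⟨okb_mono (by omega) (le_refl _) hm1, ?_⟩
        have hbd := okb_bounds_end hm1
        refine ⟨⟨by omega, by omega⟩, ?_⟩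
        have : a + vsum m + (-2 : ℤ) = 0 := by omega
        simp only [this]
        exact hokr
      · rw [List.append_assoc, List.singleton_append, vsum_append, vsum_cons]
        omega

end GPR

namespace GPR

lemma allowed_append {p : ℕ} {l₁ l₂ : List (ℤ × ℤ)} (h₁ : l₁ ∈ allowed p)
    (h₂ : l₂ ∈ allowed p) : l₁ ++ l₂ ∈ allowed p := by
  intro st hst
  rcases List.mem_append.mp hst with h | h
  · exact h₁ st h
  · exact h₂ st h

lemma concat_allowed {p : ℕ} {d : ℤ × ℤ} (hd : d ∈ pSteps p) {A : Set (List (ℤ × ℤ))}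
    (hA : A ⊆ allowed p) : ((fun l => l ++ [d]) '' A) ⊆ allowed p := by
  rintro l ⟨m, hm, rfl⟩
  exact allowed_append (hA hm) (by intro st hst; rw [List.mem_singleton] at hst; subst hst; exact hd)

lemma image2_allowed {p : ℕ} {A B : Set (List (ℤ × ℤ))} (hA : A ⊆ allowed p)
    (hB : B ⊆ allowed p) : Set.image2 (· ++ ·) A B ⊆ allowed p := by
  rintro l ⟨x, hx, y, hy, rfl⟩
  exact allowed_append (hA hx) (hB hy)

lemma okb1_no_return {v a : ℤ} {m r : List (ℤ × ℤ)} {d : ℤ × ℤ}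
    (h : okb 1 v a ((m ++ [d]) ++ r)) (he : a + vsum m + d.2 = 0) : False := by
  rw [List.append_assoc, List.singleton_append, okb_append] at h
  have h3 := okb_bounds_start h.2.2
  omega

lemma W_ML (p u : ℕ) (hp : 1 ≤ p) (a j : ℤ) (ha : 1 ≤ a) :
    W p (u + 1) a j = W p u (a - 1) (j - 1) +
      (PowerSeries.X * W p u (a - 1) 0 + PowerSeries.X ^ p * W p u (a - 1) 1) *
        W p (u + 1) 0 j := by
  have hd1 : ((1 : ℤ), (-1 : ℤ)) ∈ pSteps p := dn1_mem
  have hd2 : (((p : ℤ)), (-2 : ℤ)) ∈ pSteps p := dn2_mem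
  set C1 : Set (List (ℤ × ℤ)) := (fun l => l ++ [((1 : ℤ), (-1 : ℤ))]) '' WS p u (a - 1) 0
    with hC1def
  set C2 : Set (List (ℤ × ℤ)) := (fun l => l ++ [((p : ℤ), (-2 : ℤ))]) '' WS p u (a - 1) 1
    with hC2def
  set E1 : Set (List (ℤ × ℤ)) := Set.image2 (· ++ ·) C1 (WS p (u + 1) 0 j) with hE1def
  set E2 : Set (List (ℤ × ℤ)) := Set.image2 (· ++ ·) C2 (WS p (u + 1) 0 j) with hE2def
  have hC1a : C1 ⊆ allowed p := concat_allowed hd1 WS_allowed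
  have hC2a : C2 ⊆ allowed p := concat_allowed hd2 WS_allowed
  have hE1a : E1 ⊆ allowed p := image2_allowed hC1a WS_allowed
  have hE2a : E2 ⊆ allowed p := image2_allowed hC2a WS_allowed
  -- memberships of C-components give factorization data
  have hfact1 : ∀ x ∈ C1, ∀ y ∈ WS p (u + 1) 0 j, ∀ x' ∈ C2, ∀ y' ∈ WS p (u + 1) 0 j,
      x ++ y ≠ x' ++ y' := by
    rintro x ⟨m, hm, rfl⟩ y hy x' ⟨m', hm', rfl⟩ y' hy' he
    rw [mem_WS_shift] at hm hm'
    rw [List.append_assoc, List.singleton_append, List.append_assoc,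
      List.singleton_append] at he
    have := factor_unique m a m' _ _ y y' he hm.2.1 hm'.2.1 (by omega) (by omega)
    have h2 := this.2.1
    simp only [Prod.ext_iff] at h2
    omega
  have hdisj2 : Disjoint E1 E2 := by
    rw [Set.disjoint_left]
    rintro l ⟨x, hx, y, hy, rfl⟩ ⟨x', hx', y', hy', he⟩
    exact hfact1 x hx y hy x' hx' y' hy' he.symm
  have hdisj1 : Disjoint (WS p u (a - 1) (j - 1)) (E1 ∪ E2) := by
    rw [Set.disjoint_left]
    rintro l hl hlE
    have hok1 : okb 1 ((u : ℤ) + 1) a l := (mem_WS_shift.mp hl).2.1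
    rcases hlE with ⟨x, ⟨m, hm, rfl⟩, y, hy, rfl⟩ | ⟨x, ⟨m, hm, rfl⟩, y, hy, rfl⟩
    · rw [mem_WS_shift] at hm
      exact okb1_no_return hok1 (by have := hm.2.2; simp only; omega)
    · rw [mem_WS_shift] at hm
      exact okb1_no_return hok1 (by have := hm.2.2; simp only; omega)
  have hinj1 : ∀ x ∈ C1, ∀ y ∈ WS p (u + 1) 0 j, ∀ x' ∈ C1, ∀ y' ∈ WS p (u + 1) 0 j,
      x ++ y = x' ++ y' → x = x' ∧ y = y' := by
    rintro x ⟨m, hm, rfl⟩ y hy x' ⟨m', hm', rfl⟩ y' hy' he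
    rw [mem_WS_shift] at hm hm'
    rw [List.append_assoc, List.singleton_append, List.append_assoc,
      List.singleton_append] at he
    have := factor_unique m a m' _ _ y y' he hm.2.1 hm'.2.1 (by omega) (by omega)
    exact ⟨by rw [this.1], this.2.2⟩
  have hinj2 : ∀ x ∈ C2, ∀ y ∈ WS p (u + 1) 0 j, ∀ x' ∈ C2, ∀ y' ∈ WS p (u + 1) 0 j,
      x ++ y = x' ++ y' → x = x' ∧ y = y' := by
    rintro x ⟨m, hm, rfl⟩ y hy x' ⟨m', hm', rfl⟩ y' hy' he
    rw [mem_WS_shift] at hm hm'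
    rw [List.append_assoc, List.singleton_append, List.append_assoc,
      List.singleton_append] at he
    have := factor_unique m a m' _ _ y y' he hm.2.1 hm'.2.1 (by omega) (by omega)
    exact ⟨by rw [this.1], this.2.2⟩
  have hgf1 : gf C1 = W p u (a - 1) 0 * PowerSeries.X := by
    rw [hC1def]
    have := gf_concat hp 1 (-1) (by simpa using hd1) (WS_allowed (p := p) (v := u) (a := a - 1) (b := 0))
    simpa [W] using this
  have hgf2 : gf C2 = W p u (a - 1) 1 * PowerSeries.X ^ p := by
    rw [hC2def]
    exact gf_concat hp p (-2) hd2 WS_allowed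
  calc W p (u + 1) a j = gf (WS p u (a - 1) (j - 1) ∪ (E1 ∪ E2)) := by
        rw [W, WS_ML p u a j ha]
    _ = gf (WS p u (a - 1) (j - 1)) + (gf E1 + gf E2) := by
        rw [gf_union hp WS_allowed (Set.union_subset hE1a hE2a) hdisj1,
          gf_union hp hE1a hE2a hdisj2]
    _ = _ := by
        rw [hE1def, hE2def, gf_mul hp hC1a WS_allowed hinj1, gf_mul hp hC2a WS_allowed hinj2,
          hgf1, hgf2]
        simp only [W]
        ring

end GPR

namespace GPR

lemma cons_allowed {p : ℕ} {d : ℤ × ℤ} (hd : d ∈ pSteps p) {A : Set (List (ℤ × ℤ))}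
    (hA : A ⊆ allowed p) : (List.cons d '' A) ⊆ allowed p := by
  rintro l ⟨m, hm, rfl⟩ st hst
  rcases List.mem_cons.mp hst with rfl | h
  · exact hd
  · exact hA hm st h

lemma W_S1 (p v : ℕ) (hp : 1 ≤ p) :
    W p v 0 0 = 1 + PowerSeries.X * W p v 1 0 + PowerSeries.X ^ p * W p v 2 0 := by
  rw [W, WS_first_step]
  have h1a : (List.cons ((1 : ℤ), (1 : ℤ)) '' WS p v 1 0) ⊆ allowed p :=
    cons_allowed up1_mem WS_allowed
  have h2a : (List.cons (((p : ℤ)), (2 : ℤ)) '' WS p v 2 0) ⊆ allowed p :=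
    cons_allowed up2_mem WS_allowed
  have hnil : ({[]} : Set (List (ℤ × ℤ))) ⊆ allowed p := by
    rintro l hl
    rw [Set.mem_singleton_iff] at hl
    subst hl
    intro st hst
    simp at hst
  have hd2 : Disjoint (List.cons ((1 : ℤ), (1 : ℤ)) '' WS p v 1 0)
      (List.cons (((p : ℤ)), (2 : ℤ)) '' WS p v 2 0) := by
    rw [Set.disjoint_left]
    rintro l ⟨m, hm, rfl⟩ ⟨m', hm', he⟩
    have := (List.cons.injEq _ _ _ _).mp he
    have h2 := this.1
    simp only [Prod.ext_iff] at h2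
    omega
  have hd1 : Disjoint ({[]} : Set (List (ℤ × ℤ)))
      ((List.cons ((1 : ℤ), (1 : ℤ)) '' WS p v 1 0) ∪
        (List.cons (((p : ℤ)), (2 : ℤ)) '' WS p v 2 0)) := by
    rw [Set.disjoint_left]
    rintro l hl hl2
    rw [Set.mem_singleton_iff] at hl
    subst hl
    rcases hl2 with ⟨m, hm, he⟩ | ⟨m, hm, he⟩ <;> exact List.cons_ne_nil _ _ he
  rw [gf_union hp hnil (Set.union_subset h1a h2a) hd1, gf_union hp h1a h2a hd2, gf_nil]
  have hg1 : gf (List.cons ((1 : ℤ), (1 : ℤ)) '' WS p v 1 0) =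
      PowerSeries.X * W p v 1 0 := by
    have := gf_cons hp 1 1 (by simpa using (up1_mem (p := p))) (WS_allowed (p := p) (v := v) (a := 1) (b := 0))
    simpa [W] using this
  have hg2 : gf (List.cons (((p : ℤ)), (2 : ℤ)) '' WS p v 2 0) =
      PowerSeries.X ^ p * W p v 2 0 := by
    exact gf_cons hp p 2 up2_mem WS_allowed
  rw [hg1, hg2]
  ring

/-- reversal of a walk -/
def rev (l : List (ℤ × ℤ)) : List (ℤ × ℤ) := (l.map (fun st => (st.1, -st.2))).reverse

@[simp] lemma rev_nil : rev [] = [] := rfl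

lemma rev_cons (s : ℤ × ℤ) (l : List (ℤ × ℤ)) :
    rev (s :: l) = rev l ++ [(s.1, -s.2)] := by
  simp [rev]

@[simp] lemma rev_rev (l : List (ℤ × ℤ)) : rev (rev l) = l := by
  have hc : ((fun st : ℤ × ℤ => (st.1, -st.2)) ∘ fun st : ℤ × ℤ => (st.1, -st.2)) = id := by
    funext st
    simp
  simp [rev, List.map_reverse, List.map_map, hc]

@[simp] lemma wsum_rev (l : List (ℤ × ℤ)) : wsum (rev l) = wsum l := by
  have hc : (Prod.fst ∘ fun st : ℤ × ℤ => (st.1, -st.2)) = Prod.fst := by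
    funext st
    simp
  simp [rev, wsum, List.map_reverse, List.map_map, hc, List.sum_reverse]

@[simp] lemma vsum_rev (l : List (ℤ × ℤ)) : vsum (rev l) = -vsum l := by
  induction l with
  | nil => simp
  | cons s t ih =>
      rw [rev_cons, vsum_append, ih, vsum_cons]
      simp [vsum]
      try ring

lemma rev_steps {p : ℕ} {l : List (ℤ × ℤ)} (h : ∀ st ∈ l, st ∈ pSteps p) :
    ∀ st ∈ rev l, st ∈ pSteps p := by
  intro st hst
  simp only [rev, List.mem_reverse, List.mem_map] at hst
  obtain ⟨s, hs, rfl⟩ := hst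
  rcases h s hs with h' | h' | h' | h' <;> subst h' <;> simp [pSteps]

lemma okb_rev {lo hi : ℤ} : ∀ (l : List (ℤ × ℤ)) (a : ℤ), okb lo hi a l →
    okb lo hi (a + vsum l) (rev l) := by
  intro l
  induction l with
  | nil => intro a h; simpa using h
  | cons s t ih =>
      intro a h
      rw [rev_cons, okb_append]
      obtain ⟨⟨h1, h2⟩, h3⟩ := h
      have hb := okb_bounds_start h3
      have h4 := ih (a + s.2) h3
      constructor
      · have e : a + vsum (s :: t) = (a + s.2) + vsum t := by rw [vsum_cons]; ring
        rwa [e]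
      · simp only [vsum_rev, okb_cons, okb_nil, vsum_cons]
        refine ⟨⟨?_, ?_⟩, ?_, ?_⟩ <;> omega

lemma WS_rev {p v : ℕ} {a b : ℤ} {l : List (ℤ × ℤ)} (h : l ∈ WS p v a b) :
    rev l ∈ WS p v b a := by
  rw [mem_WS] at h ⊢
  obtain ⟨hS, hok, he⟩ := h
  refine ⟨rev_steps hS, ?_, by simp; omega⟩
  have := okb_rev l a hok
  rwa [he] at this

lemma W_symm (p v : ℕ) (a b : ℤ) : W p v a b = W p v b a := by
  unfold W
  ext n
  rw [coeff_gf, coeff_gf]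
  congr 1
  have hset : {l | l ∈ WS p v a b ∧ wsum l = (n : ℤ)} =
      rev '' {l | l ∈ WS p v b a ∧ wsum l = (n : ℤ)} := by
    ext l
    constructor
    · rintro ⟨hl, hw⟩
      exact ⟨rev l, ⟨WS_rev hl, by simpa using hw⟩, rev_rev l⟩
    · rintro ⟨m, ⟨hm, hw⟩, rfl⟩
      exact ⟨WS_rev hm, by simpa using hw⟩
  rw [hset, Set.ncard_image_of_injective _ (Function.LeftInverse.injective rev_rev)]

lemma constantCoeff_W (p v : ℕ) (hp : 1 ≤ p) :
    (PowerSeries.constantCoeff) (W p v 0 0) = 1 := by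
  have : (PowerSeries.constantCoeff) (W p v 0 0) = (PowerSeries.coeff 0) (W p v 0 0) := by
    simp [PowerSeries.coeff_zero_eq_constantCoeff]
  rw [this, W, coeff_gf]
  have hset : {l | l ∈ WS p v 0 0 ∧ wsum l = ((0 : ℕ) : ℤ)} = {[]} := by
    ext l
    constructor
    · rintro ⟨hl, hw⟩
      have hlen := length_le_wsum hp (WS_allowed hl)
      rw [Set.mem_singleton_iff]
      have : l.length = 0 := by
        push_cast at hw
        omega
      exact List.length_eq_zero_iff.mp this
    · rintro rfl
      refine ⟨mem_WS.mpr ⟨by simp, ⟨le_refl 0, by positivity⟩, by simp⟩, by simp⟩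
  rw [hset]
  simp

lemma W_ne_zero (p v : ℕ) (hp : 1 ≤ p) : W p v 0 0 ≠ 0 := by
  intro h
  have := constantCoeff_W p v hp
  rw [h] at this
  simp at this

end GPR

namespace GPR

lemma hB_lem (p u : ℕ) (hp : 1 ≤ p) :
    W p (u + 1) 1 0 = (PowerSeries.X * W p u 0 0 + PowerSeries.X ^ p * W p u 1 0) *
      W p (u + 1) 0 0 := by
  have h := W_ML p u hp 1 0 (by norm_num)
  rw [show (1 : ℤ) - 1 = 0 by norm_num, show (0 : ℤ) - 1 = -1 by norm_num,
    W_zero_of_neg (show (-1 : ℤ) < 0 by norm_num), W_symm p u 0 1] at h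
  simpa using h

lemma hC_lem (p u : ℕ) (hp : 1 ≤ p) :
    W p (u + 1) 2 0 = (PowerSeries.X * W p u 1 0 + PowerSeries.X ^ p * W p u 1 1) *
      W p (u + 1) 0 0 := by
  have h := W_ML p u hp 2 0 (by norm_num)
  rw [show (2 : ℤ) - 1 = 1 by norm_num, show (0 : ℤ) - 1 = -1 by norm_num,
    W_zero_of_neg (show (-1 : ℤ) < 0 by norm_num)] at h
  simpa using h

lemma hD_lem (p u : ℕ) (hp : 1 ≤ p) :
    W p (u + 1) 1 1 = W p u 0 0 +
      (PowerSeries.X * W p u 0 0 + PowerSeries.X ^ p * W p u 1 0) * W p (u + 1) 1 0 := by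
  have h := W_ML p u hp 1 1 (by norm_num)
  rw [show (1 : ℤ) - 1 = 0 by norm_num, W_symm p u 0 1, W_symm p (u + 1) 0 1] at h
  exact h

lemma Xgf_eq_W (p v : ℕ) : Xgf p v = W p v 0 0 := rfl

end GPR

theorem general_p_recurrence : ∀ p : ℕ, 1 ≤ p → ∀ w : ℕ, 4 ≤ w →
    Xgf p w = 1 - PowerSeries.X ^ p * Xgf p w
      + (PowerSeries.X ^ 2 + PowerSeries.X ^ p) * Xgf p w * Xgf p (w - 1)
      + (PowerSeries.X ^ (2 + p) + PowerSeries.X ^ (2 * p)) * Xgf p w * Xgf p (w - 1)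
        * Xgf p (w - 2)
      - (PowerSeries.X ^ (3 * p) + PowerSeries.X ^ (4 * p)) * Xgf p w * Xgf p (w - 1)
        * Xgf p (w - 2) * Xgf p (w - 3)
      + PowerSeries.X ^ (5 * p) * Xgf p w * Xgf p (w - 1) * Xgf p (w - 2) * Xgf p (w - 3)
        * Xgf p (w - 4) := by
  intro p hp w hw
  obtain ⟨n, rfl⟩ : ∃ n, w = n + 4 := ⟨w - 4, by omega⟩
  have e1 : n + 4 - 1 = n + 3 := by omega
  have e2 : n + 4 - 2 = n + 2 := by omega
  have e3 : n + 4 - 3 = n + 1 := by omega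
  have e4 : n + 4 - 4 = n := by omega
  rw [e1, e2, e3, e4]
  rw [GPR.Xgf_eq_W, GPR.Xgf_eq_W, GPR.Xgf_eq_W, GPR.Xgf_eq_W, GPR.Xgf_eq_W]
  set t : PowerSeries ℚ := PowerSeries.X with ht
  set x0 := GPR.W p (n + 4) 0 0 with hx0
  set x1 := GPR.W p (n + 3) 0 0 with hx1
  set x2 := GPR.W p (n + 2) 0 0 with hx2
  set x3 := GPR.W p (n + 1) 0 0 with hx3
  set x4 := GPR.W p n 0 0 with hx4
  set y1 := GPR.W p (n + 3) 1 0 with hy1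
  set y2 := GPR.W p (n + 2) 1 0 with hy2
  set y3 := GPR.W p (n + 1) 1 0 with hy3
  have hF1 : y1 = (t * x2 + t ^ p * y2) * x1 := GPR.hB_lem p (n + 2) hp
  have hF2 : y2 = (t * x3 + t ^ p * y3) * x2 := GPR.hB_lem p (n + 1) hp
  have hR0 : x0 * x1 = x1 + x0 * ((t * x1 + t ^ p * y1) ^ 2 + (t ^ p) ^ 2 * x1 * x2) := by
    have hA := GPR.W_S1 p (n + 4) hp
    have hB := GPR.hB_lem p (n + 3) hp
    have hC := GPR.hC_lem p (n + 3) hp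
    have hD := GPR.hD_lem p (n + 2) hp
    have hE := GPR.hB_lem p (n + 2) hp
    linear_combination x1 * hA + t * x1 * hB + t ^ p * x1 * hC +
      (t ^ p) ^ 2 * x0 * x1 * hD - (t ^ p) ^ 2 * x0 * y1 * hE
  have hR1 : x1 * x2 = x2 + x1 * ((t * x2 + t ^ p * y2) ^ 2 + (t ^ p) ^ 2 * x2 * x3) := by
    have hA := GPR.W_S1 p (n + 3) hp
    have hB := GPR.hB_lem p (n + 2) hp
    have hC := GPR.hC_lem p (n + 2) hp
    have hD := GPR.hD_lem p (n + 1) hp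
    have hE := GPR.hB_lem p (n + 1) hp
    linear_combination x2 * hA + t * x2 * hB + t ^ p * x2 * hC +
      (t ^ p) ^ 2 * x1 * x2 * hD - (t ^ p) ^ 2 * x1 * y2 * hE
  have hR2 : x2 * x3 = x3 + x2 * ((t * x3 + t ^ p * y3) ^ 2 + (t ^ p) ^ 2 * x3 * x4) := by
    have hA := GPR.W_S1 p (n + 2) hp
    have hB := GPR.hB_lem p (n + 1) hp
    have hC := GPR.hC_lem p (n + 1) hp
    have hD := GPR.hD_lem p n hp
    have hE := GPR.hB_lem p n hp
    linear_combination x3 * hA + t * x3 * hB + t ^ p * x3 * hC +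
      (t ^ p) ^ 2 * x2 * x3 * hD - (t ^ p) ^ 2 * x2 * y3 * hE
  have hx1ne : x1 ≠ 0 := GPR.W_ne_zero p (n + 3) hp
  have hx2ne : x2 ≠ 0 := GPR.W_ne_zero p (n + 2) hp
  have hcne : x1 ^ 2 * x2 ^ 4 ≠ 0 := mul_ne_zero (pow_ne_zero _ hx1ne) (pow_ne_zero _ hx2ne)
  apply mul_left_cancel₀ hcne
  set q : PowerSeries ℚ := t ^ p with hq
  linear_combination (x1 * x2 ^ 4) * hR0
    - (q * x0 * x1 ^ 2 * x2 ^ 3 * (1 + q * x2)) * hR1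
    + (q ^ 3 * x0 * x1 ^ 3 * x2 ^ 4) * hR2
    + (q ^ 2 * x0 * x1 * x2 ^ 4 * y1 + q ^ 3 * x0 * x1 ^ 2 * x2 ^ 4 * y2 +
        2 * t * q * x0 * x1 ^ 2 * x2 ^ 4 + t * q ^ 2 * x0 * x1 ^ 2 * x2 ^ 5) * hF1
    - (q ^ 3 * x0 * x1 ^ 3 * x2 ^ 3 * y2 + q ^ 4 * x0 * x1 ^ 3 * x2 ^ 4 * y3 +
        t * q ^ 3 * x0 * x1 ^ 3 * x2 ^ 4 * x3) * hF2
end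

section
/- Let a_n be the number of walks with steps (1,1),(1,-1),(2,2),(2,-2) from (0,0) to (2n,0) confined to 0 ≤ y ≤ 2. Then the sequence a_n satisfies the linear recurrence a_n = 2a_{n-1} + 3a_{n-2} for n ≥ 2, with a_0 = 1, a_1 = 1; equivalently a_n = (3^n + (-1)^n)/2 for n ≥ 1. -/
open PowerSeries

/-- Number of basketball walks of width 2 from `(0,0)` to `(2n,0)`. -/
noncomputable def a (n : ℕ) : ℕ := walkCount bballSteps 2 0 0 (2 * n)

/-! ### Auxiliary development -/

def W (i L : ℤ) : Set (List (ℤ × ℤ)) :=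
  {l : List (ℤ × ℤ) | IsWalk bballSteps 2 i 0 l ∧ (l.map Prod.fst).sum = L}

lemma mem_W_nil {i L : ℤ} :
    ([] : List (ℤ × ℤ)) ∈ W i L ↔ 0 ≤ i ∧ i ≤ 2 ∧ i = 0 ∧ L = 0 := by
  simp [W, IsWalk, heights]
  omega

lemma mem_W_cons {st : ℤ × ℤ} {l : List (ℤ × ℤ)} {i L : ℤ} :
    (st :: l) ∈ W i L ↔
      st ∈ bballSteps ∧ (0 ≤ i ∧ i ≤ 2) ∧ l ∈ W (i + st.2) (L - st.1) := by
  simp only [W, IsWalk, heights, Set.mem_setOf_eq, List.scanl_cons,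
    List.forall_mem_cons, List.map_cons, List.sum_cons,
    List.singleton_append, List.forall_mem_cons]
  constructor
  · rintro ⟨⟨⟨h1, h2⟩, ⟨h3, h4⟩, h5⟩, h6⟩
    exact ⟨h1, h3, ⟨h2, h4, by omega⟩, by omega⟩
  · rintro ⟨h1, h3, ⟨h2, h4, h5⟩, h6⟩
    exact ⟨⟨⟨h1, h2⟩, ⟨h3, h4⟩, by omega⟩, by omega⟩

lemma mem_bballSteps {st : ℤ × ℤ} :
    st ∈ bballSteps ↔ st = (1, 1) ∨ st = (1, -1) ∨ st = (2, 2) ∨ st = (2, -2) := by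
  simp [bballSteps]

lemma W_out {i L : ℤ} (h : ¬(0 ≤ i ∧ i ≤ 2)) : W i L = ∅ := by
  ext l
  cases l with
  | nil => simp only [mem_W_nil, Set.mem_empty_iff_false, iff_false]; omega
  | cons st l => simp only [mem_W_cons, Set.mem_empty_iff_false, iff_false]; tauto

lemma W_L_pos : ∀ (l : List (ℤ × ℤ)) {i L : ℤ}, l ∈ W i L → l ≠ [] → 0 < L := by
  have key : ∀ (l : List (ℤ × ℤ)) {i L : ℤ}, l ∈ W i L → 0 ≤ L := by
    intro l
    induction l with
    | nil => intro i L h; rw [mem_W_nil] at h; omega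
    | cons st l ih =>
      intro i L h
      rw [mem_W_cons] at h
      obtain ⟨hst, _, hl⟩ := h
      have := ih hl
      rw [mem_bballSteps] at hst
      rcases hst with h | h | h | h <;> subst h <;> simp at this ⊢ <;> omega
  intro l i L h hne
  cases l with
  | nil => exact absurd rfl hne
  | cons st l =>
    rw [mem_W_cons] at h
    obtain ⟨hst, _, hl⟩ := h
    have := key l hl
    rw [mem_bballSteps] at hst
    rcases hst with h | h | h | h <;> subst h <;> simp at this ⊢ <;> omega

lemma W_neg {i L : ℤ} (h : L < 0) : W i L = ∅ := by
  ext l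
  simp only [Set.mem_empty_iff_false, iff_false]
  intro hl
  cases l with
  | nil => rw [mem_W_nil] at hl; omega
  | cons st l' => have := W_L_pos _ hl (by simp); omega

lemma W_zero {i : ℤ} (hi : 0 ≤ i) (hi2 : i ≤ 2) :
    W i 0 = if i = 0 then {([] : List (ℤ × ℤ))} else ∅ := by
  ext l
  split
  · next h =>
    subst h
    simp only [Set.mem_singleton_iff]
    constructor
    · intro hl
      by_contra hne
      have := W_L_pos _ hl hne
      omega
    · rintro rfl; rw [mem_W_nil]; omega
  · next h =>
    simp only [Set.mem_empty_iff_false, iff_false]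
    intro hl
    cases l with
    | nil => rw [mem_W_nil] at hl; omega
    | cons st l' => have := W_L_pos _ hl (by simp); omega

lemma W_decomp {i L : ℤ} (hi : 0 ≤ i) (hi2 : i ≤ 2) (hL : 0 < L) :
    W i L = (List.cons (1, 1) '' W (i + 1) (L - 1)) ∪
      (List.cons (1, -1) '' W (i + -1) (L - 1)) ∪
      (List.cons (2, 2) '' W (i + 2) (L - 2)) ∪
      (List.cons (2, -2) '' W (i + -2) (L - 2)) := by
  ext l
  cases l with
  | nil =>
    simp only [mem_W_nil, Set.mem_union, Set.mem_image]
    constructor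
    · intro h; omega
    · rintro (((⟨x, _, h⟩ | ⟨x, _, h⟩) | ⟨x, _, h⟩) | ⟨x, _, h⟩) <;> exact absurd h (by simp)
  | cons st l =>
    simp only [mem_W_cons, mem_bballSteps, Set.mem_union, Set.mem_image, List.cons.injEq]
    constructor
    · rintro ⟨(rfl | rfl | rfl | rfl), hi', hl⟩
      · exact Or.inl (Or.inl (Or.inl ⟨l, hl, rfl, rfl⟩))
      · exact Or.inl (Or.inl (Or.inr ⟨l, hl, rfl, rfl⟩))
      · exact Or.inl (Or.inr ⟨l, hl, rfl, rfl⟩)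
      · exact Or.inr ⟨l, hl, rfl, rfl⟩
    · rintro (((⟨x, hx, rfl, rfl⟩ | ⟨x, hx, rfl, rfl⟩) | ⟨x, hx, rfl, rfl⟩) | ⟨x, hx, rfl, rfl⟩)
      · exact ⟨Or.inl rfl, ⟨hi, hi2⟩, hx⟩
      · exact ⟨Or.inr (Or.inl rfl), ⟨hi, hi2⟩, hx⟩
      · exact ⟨Or.inr (Or.inr (Or.inl rfl)), ⟨hi, hi2⟩, hx⟩
      · exact ⟨Or.inr (Or.inr (Or.inr rfl)), ⟨hi, hi2⟩, hx⟩

/-- The transfer-matrix count. -/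
def g (i L : ℤ) : ℕ :=
  if h : 0 < L then
    if 0 ≤ i ∧ i ≤ 2 then
      g (i + 1) (L - 1) + g (i + -1) (L - 1) + g (i + 2) (L - 2) + g (i + -2) (L - 2)
    else 0
  else if L = 0 ∧ i = 0 then 1 else 0
termination_by L.toNat
decreasing_by all_goals omega

lemma g_pos {i L : ℤ} (hL : 0 < L) (hi : 0 ≤ i ∧ i ≤ 2) :
    g i L = g (i + 1) (L - 1) + g (i + -1) (L - 1) + g (i + 2) (L - 2) + g (i + -2) (L - 2) := by
  rw [g]; simp [hL, hi]

lemma g_out {i L : ℤ} (h : ¬(0 ≤ i ∧ i ≤ 2)) : g i L = 0 := by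
  rw [g]; split_ifs with h1 h2 h3 <;> first | rfl | omega

lemma g_nonpos {i L : ℤ} (h : ¬ 0 < L) : g i L = if L = 0 ∧ i = 0 then 1 else 0 := by
  rw [g]; simp [h]

lemma disj_cons_image {s t : ℤ × ℤ} (h : s ≠ t) (A B : Set (List (ℤ × ℤ))) :
    Disjoint (List.cons s '' A) (List.cons t '' B) := by
  rw [Set.disjoint_left]
  rintro x ⟨u, _, rfl⟩ ⟨v, _, hv⟩
  rw [List.cons.injEq] at hv
  exact h hv.1.symm

lemma W_main : ∀ (n : ℕ) (i L : ℤ), L.toNat ≤ n → (W i L).Finite ∧ (W i L).ncard = g i L := by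
  have base : ∀ (i L : ℤ), ¬ 0 < L → (W i L).Finite ∧ (W i L).ncard = g i L := by
    intro i L hL
    rw [g_nonpos hL]
    by_cases hi : 0 ≤ i ∧ i ≤ 2
    · rcases lt_or_eq_of_le (not_lt.mp hL) with h | h
      · rw [W_neg h]
        refine ⟨Set.finite_empty, ?_⟩
        rw [if_neg (by omega)]
        simp
      · subst h
        rw [W_zero hi.1 hi.2]
        split <;> simp_all
    · rw [W_out hi]
      refine ⟨Set.finite_empty, ?_⟩
      rw [if_neg (by omega)]
      simp
  intro n
  induction n with
  | zero =>
    intro i L hL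
    exact base i L (by omega)
  | succ n ih =>
    intro i L hL
    by_cases hLpos : 0 < L
    · by_cases hi : 0 ≤ i ∧ i ≤ 2
      · obtain ⟨f1, c1⟩ := ih (i + 1) (L - 1) (by omega)
        obtain ⟨f2, c2⟩ := ih (i + -1) (L - 1) (by omega)
        obtain ⟨f3, c3⟩ := ih (i + 2) (L - 2) (by omega)
        obtain ⟨f4, c4⟩ := ih (i + -2) (L - 2) (by omega)
        rw [W_decomp hi.1 hi.2 hLpos, g_pos hLpos hi]
        have F1 := f1.image (List.cons (1, 1))
        have F2 := f2.image (List.cons (1, -1))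
        have F3 := f3.image (List.cons (2, 2))
        have F4 := f4.image (List.cons (2, -2))
        refine ⟨((F1.union F2).union F3).union F4, ?_⟩
        rw [Set.ncard_union_eq (by
              refine Set.disjoint_union_left.mpr ⟨Set.disjoint_union_left.mpr ⟨?_, ?_⟩, ?_⟩ <;>
                exact disj_cons_image (by decide) _ _)
            ((F1.union F2).union F3) F4,
          Set.ncard_union_eq (by
              refine Set.disjoint_union_left.mpr ⟨?_, ?_⟩ <;>
                exact disj_cons_image (by decide) _ _)
            (F1.union F2) F3,
          Set.ncard_union_eq (disj_cons_image (by decide) _ _) F1 F2,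
          Set.ncard_image_of_injective _ (List.cons_injective),
          Set.ncard_image_of_injective _ (List.cons_injective),
          Set.ncard_image_of_injective _ (List.cons_injective),
          Set.ncard_image_of_injective _ (List.cons_injective),
          c1, c2, c3, c4]
      · rw [W_out hi, g_out hi]
        exact ⟨Set.finite_empty, by simp⟩
    · exact base i L hLpos

lemma a_eq_g (n : ℕ) : a n = g 0 (2 * n) := by
  have : a n = (W 0 (2 * n)).ncard := rfl
  rw [this, (W_main (2 * n) 0 (2 * (n : ℤ)) (by omega)).2]

lemma g_rec_0 {L : ℤ} (hL : 0 < L) : g 0 L = g 1 (L - 1) + g 2 (L - 2) := by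
  rw [g_pos hL (by omega)]
  rw [g_out (i := (0 : ℤ) + -1) (by omega), g_out (i := (0 : ℤ) + -2) (by omega)]
  norm_num

lemma g_rec_1 {L : ℤ} (hL : 0 < L) : g 1 L = g 2 (L - 1) + g 0 (L - 1) := by
  rw [g_pos hL (by omega)]
  rw [g_out (i := (1 : ℤ) + 2) (by omega), g_out (i := (1 : ℤ) + -2) (by omega)]
  norm_num [add_comm]

lemma g_rec_2 {L : ℤ} (hL : 0 < L) : g 2 L = g 1 (L - 1) + g 0 (L - 2) := by
  rw [g_pos hL (by omega)]
  rw [g_out (i := (2 : ℤ) + 1) (by omega), g_out (i := (2 : ℤ) + 2) (by omega)]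
  norm_num

lemma g_closed : ∀ n : ℕ, (2 * g 0 (2 * n) : ℤ) = 3 ^ n + (-1) ^ n ∧
    (2 * g 2 (2 * n) : ℤ) = 3 ^ n - (-1) ^ n := by
  intro n
  induction n with
  | zero =>
    norm_num [g_nonpos (i := (0:ℤ)) (L := (0:ℤ)) (by omega),
      g_nonpos (i := (2:ℤ)) (L := (0:ℤ)) (by omega)]
  | succ n ih =>
    obtain ⟨h0, h2⟩ := ih
    have e : (2 * ((n : ℤ) + 1)) = 2 * n + 2 := by ring
    push_cast
    rw [e]
    have hpos : (0 : ℤ) < 2 * n + 2 := by omega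
    have hpos1 : (0 : ℤ) < 2 * n + 2 - 1 := by omega
    have r0 : g 0 (2 * n + 2) = g 0 (2 * n) + 2 * g 2 (2 * n) := by
      rw [g_rec_0 hpos, g_rec_1 hpos1]
      have e1 : (2 * (n : ℤ) + 2 - 1 - 1) = 2 * n := by ring
      have e2 : (2 * (n : ℤ) + 2 - 2) = 2 * n := by ring
      rw [e1, e2]; ring
    have r2 : g 2 (2 * n + 2) = g 2 (2 * n) + 2 * g 0 (2 * n) := by
      rw [g_rec_2 hpos, g_rec_1 hpos1]
      have e1 : (2 * (n : ℤ) + 2 - 1 - 1) = 2 * n := by ring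
      have e2 : (2 * (n : ℤ) + 2 - 2) = 2 * n := by ring
      rw [e1, e2]; ring
    constructor
    · rw [r0]; push_cast
      linear_combination h0 + 2 * h2
    · rw [r2]; push_cast
      linear_combination h2 + 2 * h0

lemma two_a (n : ℕ) : (2 * a n : ℤ) = 3 ^ n + (-1) ^ n := by
  rw [a_eq_g]
  have := (g_closed n).1
  push_cast at this ⊢
  exact this

theorem bball_width_two_count :
    a 0 = 1 ∧ a 1 = 1 ∧ (∀ n : ℕ, 2 ≤ n → a n = 2 * a (n - 1) + 3 * a (n - 2))
      ∧ ∀ n : ℕ, 1 ≤ n → (2 * a n : ℤ) = 3 ^ n + (-1) ^ n := by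
  have h0 := two_a 0
  have h1 := two_a 1
  refine ⟨by norm_num at h0; omega, by norm_num at h1; omega, ?_, fun n _ => two_a n⟩
  intro n hn
  obtain ⟨m, rfl⟩ : ∃ m, n = m + 2 := ⟨n - 2, by omega⟩
  have hm0 := two_a m
  have hm1 := two_a (m + 1)
  have hm2 := two_a (m + 2)
  have key : (2 * (a (m + 2) : ℤ)) = 2 * (2 * a (m + 2 - 1) + 3 * a (m + 2 - 2)) := by
    simp only [show m + 2 - 1 = m + 1 from rfl, show m + 2 - 2 = m from rfl]
    rw [hm2]
    push_cast at hm1 hm0 ⊢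
    linear_combination -2 * hm1 - 3 * hm0
  have : ((a (m + 2) : ℤ)) = (2 * a (m + 2 - 1) + 3 * a (m + 2 - 2) : ℕ) := by
    push_cast at key ⊢
    omega
  exact_mod_cast this
end
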